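/- arXiv:2512.01142 — 3 statements merged into one kernel-verified Lean document; each statement's English description precedes it below -/
import Mathlib

section
/- Let A be a commutative ring that is free of finite rank m as a ℤ-module, let n ≥ 1, and let f : A^n → A^n be an A-linear endomorphism whose determinant det_A(f) ∈ A equals the image of an integer q under the canonical ring map ℤ → A. Then the determinant of f regarded as a ℤ-linear endomorphism of A^n (by restriction of scalars; A^n is a free ℤ-module of rank n·m) equals q^m. -/
set_option maxHeartbeats 1000000

open Matrix Polynomial

namespace DetRestrictAux

variable {κ : Type} [Fintype κ] [DecidableEq κ]

def blkHom {S R : Type} [CommRing S] [CommRing R] (ι : S →+* Matrix κ κ R) {n : ℕ} :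
    Matrix (Fin n) (Fin n) S →+* Matrix (Fin n × κ) (Fin n × κ) R :=
  ((Matrix.compRingEquiv (Fin n) κ R) : Matrix (Fin n) (Fin n) (Matrix κ κ R) ≃+*
      Matrix (Fin n × κ) (Fin n × κ) R).toRingHom.comp ι.mapMatrix

lemma blkHom_apply {S R : Type} [CommRing S] [CommRing R] (ι : S →+* Matrix κ κ R) {n : ℕ}
    (N : Matrix (Fin n) (Fin n) S) (p q : Fin n × κ) :
    blkHom ι N p q = ι (N p.1 q.1) p.2 q.2 := rfl

lemma det_toSquareBlockProp {R : Type} [CommRing R] {n : ℕ}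
    (M : Matrix (Fin n × κ) (Fin n × κ) R) (i0 : Fin n) (T : Matrix κ κ R)
    (hT : ∀ k l, M (i0, k) (i0, l) = T k l) :
    (M.toSquareBlockProp (fun p => p.1 = i0)).det = T.det := by
  let e : κ ≃ { p : Fin n × κ // p.1 = i0 } :=
    { toFun := fun k => ⟨(i0, k), rfl⟩
      invFun := fun p => p.1.2
      left_inv := fun k => rfl
      right_inv := fun p => by
        obtain ⟨⟨i, k⟩, h⟩ := p
        cases h
        rfl }
  rw [← Matrix.det_submatrix_equiv_self e (M.toSquareBlockProp (fun p => p.1 = i0))]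
  congr 1
  ext k l
  exact hT k l

lemma step {S R : Type} [CommRing S] [CommRing R] {n : ℕ} (ι : S →+* Matrix κ κ R)
    (N : Matrix (Fin (n + 1)) (Fin (n + 1)) S)
    (hreg : IsRegular ((ι (N 0 0)).det))
    (IH : ∀ P : Matrix (Fin n) (Fin n) S, (blkHom ι P).det = (ι P.det).det) :
    (blkHom ι N).det = (ι N.det).det := by
  set a := N 0 0 with ha
  -- the (upper-triangular) column-elimination matrix
  set E : Matrix (Fin (n + 1)) (Fin (n + 1)) S := fun i j =>
    if i = j then (if j = 0 then 1 else a) else if i = 0 then -N 0 j else 0 with hE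
  set B := N * E with hB
  -- entries of B
  have hBc0 : ∀ i, B i 0 = N i 0 := by
    intro i
    rw [hB, Matrix.mul_apply]
    have : ∀ k, N i k * E k 0 = if k = 0 then N i 0 else 0 := by
      intro k
      rcases eq_or_ne k 0 with rfl | hk
      · simp [hE]
      · simp [hE, hk]
    simp only [this, Finset.sum_ite_eq' Finset.univ (0 : Fin (n + 1)), Finset.mem_univ, if_true]
  have hBne : ∀ i j, j ≠ 0 → B i j = N i j * a - N i 0 * N 0 j := by
    intro i j hj
    rw [hB, Matrix.mul_apply]
    have : ∀ k, N i k * E k j =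
        (if k = j then N i j * a else 0) + (if k = 0 then -(N i 0 * N 0 j) else 0) := by
      intro k
      rcases eq_or_ne k j with rfl | hkj
      · simp [hE, hj]
      · rcases eq_or_ne k 0 with rfl | hk0
        · simp [hE, Ne.symm hj, mul_neg]
        · simp [hE, hkj, hk0]
    rw [Finset.sum_congr rfl fun k _ => this k, Finset.sum_add_distrib,
      Finset.sum_ite_eq' Finset.univ, Finset.sum_ite_eq' Finset.univ]
    simp [sub_eq_add_neg]
  have hB00 : B 0 0 = a := by rw [hBc0]
  have hB0 : ∀ j, j ≠ 0 → B 0 j = 0 := by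
    intro j hj
    rw [hBne 0 j hj, ← ha, mul_comm, sub_self]
  -- determinant of E over S
  have hEtri : E.BlockTriangular id := by
    intro i j hij
    have hij' : ¬ i = j := fun h => absurd (h ▸ hij) (lt_irrefl _)
    have hi0 : ¬ i = 0 := by
      rintro rfl
      exact absurd hij (by simp)
    simp [hE, hij', hi0]
  have hdiagE : ∀ i : Fin (n + 1), E i i = if i = 0 then 1 else a := by
    intro i; simp [hE]
  have hdetE : E.det = a ^ n := by
    rw [Matrix.det_of_upperTriangular hEtri]
    rw [Finset.prod_congr rfl fun i _ => hdiagE i]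
    rw [Fin.prod_univ_succ]
    simp [Fin.succ_ne_zero]
  -- determinant identities over S
  have hBdet : B.det = N.det * a ^ n := by rw [hB, Matrix.det_mul, hdetE]
  have hBexp : B.det = a * (B.submatrix Fin.succ Fin.succ).det := by
    rw [Matrix.det_succ_row_zero, Fin.sum_univ_succ]
    have h0 : ∀ j : Fin n, (-1 : S) ^ ((j.succ : Fin (n+1)) : ℕ) * B 0 j.succ *
        (B.submatrix Fin.succ (j.succ).succAbove).det = 0 := by
      intro j
      rw [hB0 j.succ (Fin.succ_ne_zero j)]
      ring
    rw [Finset.sum_congr rfl fun j _ => h0 j]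
    simp [hB00, Fin.succAbove_zero]
  -- block determinant of E
  have hEblkTri : (blkHom ι E).BlockTriangular Prod.fst := by
    intro p q hpq
    have : E p.1 q.1 = 0 := hEtri hpq
    rw [blkHom_apply, this, map_zero]
    rfl
  have hdetblkE : (blkHom ι E).det = (ι a).det ^ n := by
    rw [hEblkTri.det_fintype]
    have : ∀ i : Fin (n + 1), ((blkHom ι E).toSquareBlock Prod.fst i).det = (ι (E i i)).det := by
      intro i
      exact det_toSquareBlockProp (blkHom ι E) i (ι (E i i)) (fun k l => rfl)
    rw [Finset.prod_congr rfl fun i _ => this i]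
    rw [Fin.prod_univ_succ]
    have h0 : E 0 0 = 1 := by simp [hdiagE]
    rw [h0, (_root_.map_one ι : ι 1 = 1), Matrix.det_one, one_mul]
    have h1 : ∀ j : Fin n, E j.succ j.succ = a := by
      intro j; simp [hdiagE, Fin.succ_ne_zero]
    rw [Finset.prod_congr rfl fun j _ => congrArg (fun x => (ι x).det) (h1 j)]
    simp
  -- block determinant of B : expand along the first block row
  have hblkB : (blkHom ι B).det =
      (ι a).det * (blkHom ι (B.submatrix Fin.succ Fin.succ)).det := by
    have hz : ∀ p : Fin (n+1) × κ, p.1 = 0 → ∀ q : Fin (n+1) × κ, ¬ q.1 = 0 →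
        blkHom ι B p q = 0 := by
      intro p hp q hq
      rw [blkHom_apply, hp, hB0 q.1 hq, map_zero]
      rfl
    rw [Matrix.twoBlockTriangular_det' (blkHom ι B) (fun p => p.1 = 0) hz,
      det_toSquareBlockProp (blkHom ι B) 0 (ι a) (fun k l => by
        rw [blkHom_apply]; simp [hB00])]
    refine congrArg (fun x => (ι a).det * x) ?_
    · -- reindex the complementary block
      let e : (Fin n × κ) ≃ { p : Fin (n+1) × κ // ¬ p.1 = 0 } :=
        { toFun := fun p => ⟨(p.1.succ, p.2), Fin.succ_ne_zero p.1⟩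
          invFun := fun p => (p.1.1.pred p.2, p.1.2)
          left_inv := fun p => by simp
          right_inv := fun p => by
            obtain ⟨⟨i, k⟩, h⟩ := p
            simp [Fin.succ_pred] }
      rw [← Matrix.det_submatrix_equiv_self e]
      refine congrArg Matrix.det ?_
      ext ⟨i, k⟩ ⟨j, l⟩
      rfl
  -- combine
  have h1 : (blkHom ι B).det = (blkHom ι N).det * (ι a).det ^ n := by
    rw [hB, _root_.map_mul (blkHom ι), Matrix.det_mul, hdetblkE]
  have h2 : (blkHom ι B).det = (ι a).det * (ι (B.submatrix Fin.succ Fin.succ).det).det := by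
    rw [hblkB, IH]
  have h3 : (ι a).det * (ι (B.submatrix Fin.succ Fin.succ).det).det
      = (ι N.det).det * (ι a).det ^ n := by
    have := congrArg (fun x : S => (ι x).det) (hBexp.symm.trans hBdet)
    simpa [_root_.map_mul, Matrix.det_mul, mul_pow] using this
  have h4 : (blkHom ι N).det * (ι a).det ^ n = (ι N.det).det * (ι a).det ^ n := by
    rw [← h1, h2, h3]
  exact (hreg.pow n).right h4

/-- Silvester's determinant theorem for block matrices whose blocks are images of a
commutative ring under a ring hom into a matrix ring. -/
theorem det_blk : ∀ (n : ℕ) (S R : Type) [CommRing S] [CommRing R]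
    (ι : S →+* Matrix κ κ R) (N : Matrix (Fin n) (Fin n) S),
    (blkHom ι N).det = (ι N.det).det := by
  intro n
  induction n with
  | zero =>
    intro S R _ _ ι N
    rw [Matrix.det_isEmpty (A := N), _root_.map_one ι, Matrix.det_one, Matrix.det_isEmpty]
  | succ n IH =>
    intro S R _ _ ι N
    -- pass to polynomial rings to make the pivot regular
    let ι' : S[X] →+* Matrix κ κ R[X] :=
      ((matPolyEquiv.symm : (Matrix κ κ R)[X] ≃ₐ[R] Matrix κ κ R[X]).toRingEquiv :
        (Matrix κ κ R)[X] ≃+* Matrix κ κ R[X]).toRingHom.comp (Polynomial.mapRingHom ι)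
    have hιC : ∀ s : S, ι' (C s) = (ι s).map C := by
      intro s
      show matPolyEquiv.symm (Polynomial.map ι (C s)) = _
      rw [Polynomial.map_C, matPolyEquiv_symm_C]
    have hιX : ι' X = Matrix.diagonal fun _ : κ => (X : R[X]) := by
      show matPolyEquiv.symm (Polynomial.map ι X) = _
      rw [Polynomial.map_X, matPolyEquiv_symm_X]
    let N' : Matrix (Fin (n + 1)) (Fin (n + 1)) S[X] := fun i j =>
      if i = 0 ∧ j = 0 then C (N i j) + X else C (N i j)
    have hpiv : N' 0 0 = C (N 0 0) + X := by simp [N']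
    have hreg : IsRegular ((ι' (N' 0 0)).det) := by
      rw [hpiv, _root_.map_add, hιC, hιX]
      have hdiag : (Matrix.diagonal fun _ : κ => (X : R[X])) =
          (X : R[X]) • (1 : Matrix κ κ R[X]) := by
        rw [Matrix.smul_one_eq_diagonal]
      rw [hdiag]
      refine Polynomial.Monic.isRegular ?_
      rw [Polynomial.Monic.def, ← Polynomial.leadingCoeff_det_X_one_add_C (ι (N 0 0)), add_comm]
    have hstep := step ι' N' hreg (IH S[X] R[X] ι')
    -- evaluate at 0
    let ev : R[X] →+* R := evalRingHom 0
    let evS : S[X] →+* S := evalRingHom 0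
    have hcomm : ev.mapMatrix.comp ι' = ι.comp evS := by
      apply Polynomial.ringHom_ext
      · intro s
        ext k l
        simp [hιC s, ev, evS]
      · ext k l
        simp [hιX, ev, evS, Matrix.diagonal_apply, apply_ite]
    have hcomm' : ∀ s : S[X], (ι' s).map ev = ι (evS s) := fun s =>
      DFunLike.congr_fun hcomm s
    have hNev : N'.map evS = N := by
      ext i j
      by_cases h : i = 0 ∧ j = 0 <;> rw [Matrix.map_apply] <;> simp [N', evS, h]
    have lhs : ev ((blkHom ι' N').det) = (blkHom ι N).det := by
      rw [RingHom.map_det]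
      refine congrArg Matrix.det ?_
      ext p q
      have := congrFun (congrFun (hcomm' (N' p.1 q.1)) p.2) q.2
      simpa [Matrix.map_apply, blkHom_apply] using
        this.trans (by rw [show evS (N' p.1 q.1) = N p.1 q.1 from congrFun (congrFun hNev p.1) q.1])
    have rhs : ev ((ι' N'.det).det) = (ι N.det).det := by
      rw [RingHom.map_det]
      refine congrArg Matrix.det ?_
      have : evS N'.det = N.det := by rw [RingHom.map_det]; exact congrArg Matrix.det hNev
      calc ev.mapMatrix (ι' N'.det) = (ι' N'.det).map ev := rfl
        _ = ι (evS N'.det) := hcomm' N'.det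
        _ = ι N.det := by rw [this]
    rw [← lhs, hstep, rhs]

end DetRestrictAux



/-- if `A` is a commutative ring which is a free `ℤ`-module of finite
rank `m`, and `f : A^n → A^n` is an `A`-linear endomorphism whose `A`-determinant is
the image of an integer `q`, then the determinant of `f` viewed as a `ℤ`-linear
endomorphism equals `q ^ m`. -/
theorem det_restrictScalars_int_of_det_int
    (A : Type) [CommRing A] [Module.Free ℤ A] [Module.Finite ℤ A]
    (m : ℕ) (hm : Module.finrank ℤ A = m)
    (n : ℕ) (hn : 1 ≤ n) (q : ℤ)
    (f : (Fin n → A) →ₗ[A] (Fin n → A))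
    (hdet : LinearMap.det f = algebraMap ℤ A q) :
    LinearMap.det (f.restrictScalars ℤ) = q ^ m := by
  classical
  set ιA := Module.Free.ChooseBasisIndex ℤ A with hιA
  let b : Module.Basis ιA ℤ A := Module.Free.chooseBasis ℤ A
  have hcard : Fintype.card ιA = m := by
    rw [← hm, Module.finrank_eq_card_chooseBasisIndex]
  let e := Pi.basisFun A (Fin n)
  set M := LinearMap.toMatrix e e f with hM
  have hMdet : M.det = algebraMap ℤ A q := by
    rw [hM, LinearMap.det_toMatrix]; exact hdet
  let B : Module.Basis ((_ : Fin n) × ιA) ℤ (Fin n → A) := Pi.basis (fun _ => b)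
  have hdT : LinearMap.det (f.restrictScalars ℤ) =
      (LinearMap.toMatrix B B (f.restrictScalars ℤ)).det :=
    (LinearMap.det_toMatrix _ _).symm
  let ι : A →+* Matrix ιA ιA ℤ := (Algebra.leftMulMatrix b).toRingHom
  let σ := Equiv.sigmaEquivProd (Fin n) ιA
  have hT : LinearMap.toMatrix B B (f.restrictScalars ℤ) =
      (DetRestrictAux.blkHom ι M).submatrix σ σ := by
    ext ⟨i, k⟩ ⟨j, l⟩
    rw [LinearMap.toMatrix_apply]
    have hBjl : B ⟨j, l⟩ = Pi.single j (b l) := by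
      simp [B, Pi.basis_apply]
    have hfe : ∀ i', f (e j) i' = M i' j := by
      intro i'
      rw [hM]
      simp [LinearMap.toMatrix_apply, e, Pi.basisFun_repr]
    have happ : (f.restrictScalars ℤ) (B ⟨j, l⟩) i = M i j * b l := by
      have h1 : Pi.single j (b l) = b l • e j := by
        ext i'
        by_cases h : i' = j <;>
          simp [e, Pi.basisFun_apply, Pi.single_apply, h, Pi.smul_apply]
      rw [LinearMap.restrictScalars_apply, hBjl, h1, _root_.map_smul f]
      rw [Pi.smul_apply, smul_eq_mul, hfe i, mul_comm]
    show (Pi.basis fun _ => b).repr ((f.restrictScalars ℤ) (B ⟨j, l⟩)) ⟨i, k⟩ = _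
    rw [Pi.basis_repr, happ]
    rw [Matrix.submatrix_apply, DetRestrictAux.blkHom_apply]
    show b.repr (M i j * b l) k = Algebra.leftMulMatrix b (M i j) k l
    rw [Algebra.leftMulMatrix_eq_repr_mul]
  rw [hdT, hT, Matrix.det_submatrix_equiv_self, DetRestrictAux.det_blk n A ℤ ι M, hMdet]
  have hιq : ι (algebraMap ℤ A q) = algebraMap ℤ (Matrix ιA ιA ℤ) q :=
    (Algebra.leftMulMatrix b).commutes q
  rw [hιq, Algebra.algebraMap_eq_smul_one, Matrix.det_smul, Matrix.det_one, mul_one, hcard]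
end

section
/- Let M be a finitely generated S-torsion R-module. Then Ext^i_R(M, A) = 0 (is a subsingleton) for every i ≥ 0; in particular Hom_R(M, A) = 0. -/
noncomputable section

/-- The Laurent polynomial ring `ℤ[x₁^{±1},…,x_d^{±1}]`. -/
abbrev LaurentZ (d : ℕ) : Type := AddMonoidAlgebra ℤ (Fin d → ℤ)

/-- The Laurent polynomial ring `ℚ[x₁^{±1},…,x_d^{±1}]`, playing the role of `S⁻¹R`. -/
abbrev LaurentQ (d : ℕ) : Type := AddMonoidAlgebra ℚ (Fin d → ℤ)

/-- The coefficient-inclusion ring homomorphism `ℤ[Λ] → ℚ[Λ]`. -/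
def laurentInclusion (d : ℕ) : LaurentZ d →ₐ[ℤ] LaurentQ d :=
  AddMonoidAlgebra.lift ℤ (LaurentQ d) (Fin d → ℤ) (AddMonoidAlgebra.of ℚ (Fin d → ℤ))

instance (d : ℕ) : Algebra (LaurentZ d) (LaurentQ d) :=
  (laurentInclusion d).toRingHom.toAlgebra

/-- `K = A/R = S⁻¹R/R`, the cokernel of `R → A` as an `R`-module. -/
abbrev LaurentK (d : ℕ) : Type :=
  LaurentQ d ⧸ LinearMap.range (Algebra.linearMap (LaurentZ d) (LaurentQ d))

/-- `M` is `S`-torsion: every element is annihilated by a nonzero integer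
(embedded in `R` as a constant polynomial). -/
def IsSTorsion (d : ℕ) (M : Type) [AddCommGroup M] [Module (LaurentZ d) M] : Prop :=
  ∀ m : M, ∃ s : ℤ, s ≠ 0 ∧ ((s : LaurentZ d)) • m = 0

/-- `M` has projective dimension at most 1 over `S`: there is a short exact sequence
`0 → N₁ → N₀ → M → 0` with `N₀`, `N₁` projective. -/
def HasProjDimLE1 (S : Type) [CommRing S] (M : Type) [AddCommGroup M] [Module S M] : Prop :=
  ∃ (N₀ N₁ : ModuleCat.{0} S) (i : N₁ →ₗ[S] N₀) (p : N₀ →ₗ[S] M),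
    Module.Projective S N₀ ∧ Module.Projective S N₁ ∧
      Function.Injective i ∧ Function.Surjective p ∧ LinearMap.range i = LinearMap.ker p

/-- `Ext^i` of `S`-modules, via the derived functor `Ext` of `ModuleCat S`. -/
abbrev extGroup (S : Type) [CommRing S] (i : ℕ) (M N : Type) [AddCommGroup M] [Module S M]
    [AddCommGroup N] [Module S N] : Type :=
  ((Ext S (ModuleCat S) i).obj (Opposite.op (ModuleCat.of S M))).obj (ModuleCat.of S N)

open CategoryTheory Limits HomologicalComplex

section Aux

variable {d : ℕ}

/-- The action of a constant integer polynomial on `LaurentQ d` is just scalar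
multiplication by that integer (as a rational). -/
lemma intCast_smul_laurentQ (s : ℤ) (a : LaurentQ d) :
    ((s : LaurentZ d)) • a = (s : ℚ) • a := by
  have h1 : ((s : LaurentZ d)) • a = algebraMap (LaurentZ d) (LaurentQ d) (s : LaurentZ d) * a :=
    Algebra.smul_def _ _
  have h2 : algebraMap (LaurentZ d) (LaurentQ d) ((s : ℤ) : LaurentZ d) = ((s : ℤ) : LaurentQ d) :=
    map_intCast _ _
  have h3 : ((s : ℤ) : LaurentQ d) = algebraMap ℚ (LaurentQ d) ((s : ℤ) : ℚ) :=
    (map_intCast (algebraMap ℚ (LaurentQ d)) s).symm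
  rw [h1, h2, h3, ← Algebra.smul_def]

/-- Division by `s` on `LaurentQ d`, as an endomorphism of `LaurentQ d` as a
`LaurentZ d`-module. -/
def tauQ (d : ℕ) (s : ℤ) : LaurentQ d →ₗ[LaurentZ d] LaurentQ d where
  toFun a := ((s : ℚ))⁻¹ • a
  map_add' a b := smul_add _ _ _
  map_smul' r a := by
    simp only [RingHom.id_apply]
    rw [Algebra.smul_def r a, Algebra.smul_def r (((s : ℚ))⁻¹ • a), mul_smul_comm]

/-- `tauQ` inverts the action of `s`. -/
lemma tauQ_cancel (d : ℕ) (s : ℤ) (hsQ : (s : ℚ) ≠ 0) (a : LaurentQ d) :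
    tauQ d s (((s : LaurentZ d)) • a) = a := by
  show ((s : ℚ))⁻¹ • (((s : LaurentZ d)) • a) = a
  rw [intCast_smul_laurentQ, inv_smul_smul₀ hsQ]

/-- `tauQ` inverts the action of `s` (other order). -/
lemma tauQ_cancel' (d : ℕ) (s : ℤ) (hsQ : (s : ℚ) ≠ 0) (a : LaurentQ d) :
    ((s : LaurentZ d)) • tauQ d s a = a := by
  show ((s : LaurentZ d)) • (((s : ℚ))⁻¹ • a) = a
  rw [intCast_smul_laurentQ, smul_inv_smul₀ hsQ]

end Aux

/-- for a finitely generated `S`-torsion `R`-module `M`,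
`Ext^i_R(M, A) = 0` for all `i ≥ 0`; in particular `Hom_R(M, A) = 0`. -/
theorem ext_into_localization_subsingleton
    (d : ℕ) (hd : 1 ≤ d) (M : Type) [AddCommGroup M] [Module (LaurentZ d) M]
    [Module.Finite (LaurentZ d) M] (htor : IsSTorsion d M) :
    (∀ i : ℕ, Subsingleton (extGroup (LaurentZ d) i M (LaurentQ d))) ∧
    (∀ f : M →ₗ[LaurentZ d] LaurentQ d, f = 0) := by
  classical
  -- Step 1: a single nonzero integer annihilating all of `M`.
  obtain ⟨T, hT⟩ := Module.Finite.fg_top (R := LaurentZ d) (M := M)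
  have hσ0 : ∀ m : M, (htor m).choose ≠ 0 := fun m => (htor m).choose_spec.1
  have hσann : ∀ m : M, (((htor m).choose : LaurentZ d)) • m = 0 :=
    fun m => (htor m).choose_spec.2
  set s : ℤ := ∏ m ∈ T, (htor m).choose with hs
  have hs0 : s ≠ 0 := Finset.prod_ne_zero_iff.mpr fun m _ => hσ0 m
  have hann : ∀ m : M, ((s : LaurentZ d)) • m = 0 := by
    have hker : (⊤ : Submodule (LaurentZ d) M) ≤
        LinearMap.ker ((s : LaurentZ d) • (LinearMap.id : M →ₗ[LaurentZ d] M)) := by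
      rw [← hT, Submodule.span_le]
      intro t ht
      have ht' : t ∈ T := ht
      simp only [SetLike.mem_coe, LinearMap.mem_ker, LinearMap.smul_apply, LinearMap.id_apply]
      rw [hs, ← Finset.prod_erase_mul T _ ht', Int.cast_mul, mul_smul, hσann t, smul_zero]
    intro m
    simpa using hker (Submodule.mem_top (R := LaurentZ d) (M := M))
  have hsQ : (s : ℚ) ≠ 0 := by exact_mod_cast hs0
  -- Step 2: Hom part.
  have homzero : ∀ f : M →ₗ[LaurentZ d] LaurentQ d, f = 0 := by
    intro f
    apply LinearMap.ext
    intro m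
    rw [LinearMap.zero_apply]
    have h1 : ((s : LaurentZ d)) • f m = 0 := by rw [← map_smul, hann, map_zero]
    rw [intCast_smul_laurentQ] at h1
    exact (smul_eq_zero.mp h1).resolve_left hsQ
  refine ⟨fun i => ?_, homzero⟩
  -- Step 3: Ext part.
  set S := LaurentZ d
  let Mc : ModuleCat.{0} S := ModuleCat.of S M
  let Ac : ModuleCat.{0} S := ModuleCat.of S (LaurentQ d)
  obtain ⟨P⟩ : Nonempty (ProjectiveResolution Mc) := HasProjectiveResolution.out
  -- the chain endomorphism given by `s`
  let φ : P.complex ⟶ P.complex := ((s : LaurentZ d)) • 𝟙 P.complex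
  have hφf : ∀ n, φ.f n = ((s : LaurentZ d)) • 𝟙 (P.complex.X n) := by
    intro n
    simp [φ, HomologicalComplex.smul_f_apply]
  have hφπ : φ ≫ P.π = 0 := by
    have h1 : φ ≫ P.π = ((s : LaurentZ d)) • P.π := by
      rw [Linear.smul_comp, Category.id_comp]
    rw [h1]
    ext x
    simp only [HomologicalComplex.smul_f_apply, HomologicalComplex.zero_f_apply,
      LinearMap.smul_apply, LinearMap.zero_apply]
    exact hann _
  let h : Homotopy φ 0 := CategoryTheory.ProjectiveResolution.liftHomotopyZero φ hφπ
  -- the Hom complex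
  let K : CochainComplex (ModuleCat.{0} S) ℕ := P.complex.linearYonedaObj S Ac
  let ψ : K ⟶ K := ((s : LaurentZ d)) • 𝟙 K
  -- the inverse of ψ, built from division by `s` on `A`
  let τ : Ac ⟶ Ac := ModuleCat.ofHom (tauQ d s)
  have hτ : ∀ (X : ModuleCat.{0} S) (f : X ⟶ Ac), (((s : LaurentZ d)) • f) ≫ τ = f := by
    intro X f
    apply ModuleCat.hom_ext
    apply LinearMap.ext
    intro x
    show τ.hom ((((s : LaurentZ d)) • f).hom x) = f.hom x
    rw [ModuleCat.hom_smul, LinearMap.smul_apply]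
    exact tauQ_cancel d s hsQ (f.hom x)
  let χ : K ⟶ K :=
    { f := fun n => show K.X n ⟶ K.X n from ModuleCat.ofHom
        { toFun := fun f => f ≫ τ
          map_add' := fun f g => Preadditive.add_comp _ _ _ _ _ _
          map_smul' := fun r f => Linear.smul_comp _ _ _ _ _ _ }
      comm' := fun i j _ => by
        ext f
        show (K.d i j) (f ≫ τ) = (K.d i j) f ≫ τ
        show (P.complex.d j i ≫ f) ≫ τ = (P.complex.d j i ≫ f) ≫ τ
        rfl }
  have hψf : ∀ (n : ℕ) (f : P.complex.X n ⟶ Ac), (ψ.f n) f = ((s : LaurentZ d)) • f := by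
    intro n f
    show ((((s : LaurentZ d)) • 𝟙 K).f n) f = _
    rfl
  have hψχ : ψ ≫ χ = 𝟙 K := by
    ext n f
    show (χ.f n) ((ψ.f n) f) = f
    erw [hψf]
    exact hτ _ f
  have hχψ : χ ≫ ψ = 𝟙 K := by
    ext n f
    show (ψ.f n) ((χ.f n) f) = f
    erw [hψf]
    have hcf : (χ.f n) f = (show P.complex.X n ⟶ Ac from f) ≫ τ := rfl
    rw [hcf, ← Linear.smul_comp]
    exact hτ _ _
  -- ψ is null-homotopic
  let hψ0 : Homotopy ψ 0 :=
    { hom := fun i j => show K.X i ⟶ K.X j from ModuleCat.ofHom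
        { toFun := fun f => h.hom j i ≫ f
          map_add' := fun f g => Preadditive.comp_add _ _ _ _ _ _
          map_smul' := fun r f => Linear.comp_smul _ _ _ _ _ _ }
      zero := fun i j hij => by
        have hz : h.hom j i = 0 := h.zero j i hij
        apply ModuleCat.hom_ext
        apply LinearMap.ext
        intro (f : P.complex.X i ⟶ Ac)
        show h.hom j i ≫ f = 0
        rw [hz, zero_comp]
      comm := fun i => by
        have rel1 : (ComplexShape.down ℕ).Rel (i+1) i := by simp
        have hc := h.comm i
        rw [dNext_nat, prevD_eq h.hom rel1] at hc
        simp only [HomologicalComplex.zero_f_apply, add_zero] at hc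
        rw [dNext_eq _ (show (ComplexShape.up ℕ).Rel i (i+1) by simp), prevD_nat,
          HomologicalComplex.zero_f_apply, add_zero]
        apply ModuleCat.hom_ext
        apply LinearMap.ext
        intro (f : P.complex.X i ⟶ Ac)
        erw [hψf]
        show ((s : LaurentZ d)) • f =
          (h.hom i (i+1) ≫ (P.complex.d (i+1) i ≫ f)) +
            (P.complex.d i (i-1) ≫ (h.hom (i-1) i ≫ f))
        have h1 : ((s : LaurentZ d)) • f = φ.f i ≫ f := by
          rw [hφf, Linear.smul_comp, Category.id_comp]
        rw [h1, hc, Preadditive.add_comp, Category.assoc, Category.assoc]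
        rw [add_comm] }
  have hhomol : homologyMap ψ i = 0 := by
    rw [hψ0.homologyMap_eq i]
    exact homologyMap_zero K K i
  have hIso : IsIso ψ := ⟨χ, hψχ, hχψ⟩
  have hiso : IsIso (homologyMap ψ i) := by
    change IsIso ((homologyFunctor (ModuleCat.{0} S) (ComplexShape.up ℕ) i).map ψ)
    infer_instance
  have hinj : Function.Injective (homologyMap ψ i) :=
    (CategoryTheory.ConcreteCategory.bijective_of_isIso (homologyMap ψ i)).1
  have hsub : Subsingleton (K.homology i) := by
    have ha : ∀ x : K.homology i, x = 0 := by
      intro x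
      apply hinj
      rw [hhomol]
      rfl
    exact ⟨fun a b => by rw [ha a, ha b]⟩
  let e : ((Ext S (ModuleCat.{0} S) i).obj (Opposite.op Mc)).obj Ac ≅ K.homology i :=
    P.isoExt i Ac
  refine ⟨fun x y => ?_⟩
  have h1 : e.hom x = e.hom y := Subsingleton.elim _ _
  have h3 : ∀ z, e.inv (e.hom z) = z := by
    intro z
    have h5 : e.inv (e.hom z) = (e.hom ≫ e.inv) z := rfl
    rw [h5, e.hom_inv_id]
    rfl
  have h2 := congrArg e.inv h1
  rw [h3, h3] at h2
  exact h2
end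
end

section
/- Let M be a finitely generated S-torsion R-module of projective dimension at most 1 (an (R,S)-module). Then the evaluation map M → Hom_R(Hom_R(M, K), K), sending m to the map f ↦ f(m), is bijective. (Here Hom_R carries its canonical R-module structure; the paper's S-dual M^∨ = Hom_R(M, S⁻¹R/R) has the same underlying abelian group, so this is the statement that the double S-dual of an (R,S)-module is naturally isomorphic to the module itself.) -/
noncomputable section

namespace DD

variable {d : ℕ}

/-- the inclusion as linear map -/
abbrev inc : LaurentZ d →ₗ[LaurentZ d] LaurentQ d := Algebra.linearMap (LaurentZ d) (LaurentQ d)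

lemma inc_single (g : Fin d → ℤ) (a : ℤ) :
    (laurentInclusion d) (AddMonoidAlgebra.single g a) = AddMonoidAlgebra.single g (a : ℚ) := by
  unfold laurentInclusion
  rw [AddMonoidAlgebra.lift_single]
  show a • (AddMonoidAlgebra.single g (1:ℚ)) = _
  rw [AddMonoidAlgebra.smul_single]
  norm_num

lemma inc_apply_coeff (x : LaurentZ d) (g : Fin d → ℤ) :
    ((laurentInclusion d) x).coeff g = ((x.coeff g : ℤ) : ℚ) := by
  induction x using AddMonoidAlgebra.induction with
  | zero => simp
  | single_add g' a f _ _ ih =>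
      rw [map_add, AddMonoidAlgebra.coeff_add, AddMonoidAlgebra.coeff_add, Finsupp.add_apply,
        Finsupp.add_apply, ih, inc_single]
      push_cast
      simp [AddMonoidAlgebra.coeff_single, Finsupp.single_apply, apply_ite]

lemma inc_injective : Function.Injective (inc (d := d)) := by
  intro x y h
  have h' : (laurentInclusion d) x = (laurentInclusion d) y := h
  ext g
  have := congrArg (fun z => z.coeff g) h'
  simpa only [inc_apply_coeff, Int.cast_inj] using this

end DD

namespace Scalars

variable {d : ℕ}

lemma smul_intCast (s : ℤ) (a : LaurentQ d) :
    ((s : LaurentZ d)) • a = (s : ℚ) • a := by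
  rw [Algebra.smul_def, map_intCast (algebraMap (LaurentZ d) (LaurentQ d)) s,
    ← map_intCast (algebraMap ℚ (LaurentQ d)) s, ← Algebra.smul_def]

lemma rq_smul_comm (c : LaurentZ d) (q : ℚ) (a : LaurentQ d) :
    c • q • a = q • c • a := by
  rw [Algebra.smul_def c (q • a), Algebra.smul_def c a, mul_smul_comm]

/-- multiplication by a rational scalar, as an `R`-linear map on `A`. -/
def qsmul (q : ℚ) : LaurentQ d →ₗ[LaurentZ d] LaurentQ d where
  toFun a := q • a
  map_add' a b := smul_add q a b
  map_smul' c a := by simp only [RingHom.id_apply]; rw [rq_smul_comm]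

@[simp] lemma qsmul_apply (q : ℚ) (a : LaurentQ d) : qsmul q a = q • a := rfl

lemma s_smul_injective {s : ℤ} (hs : s ≠ 0) :
    Function.Injective (fun r : LaurentZ d => (s : LaurentZ d) • r) := by
  intro r r' h
  apply DD.inc_injective (d := d)
  have h2 := congrArg (DD.inc (d := d)) h
  simp only [map_smul, smul_intCast] at h2
  have hq : (s : ℚ) ≠ 0 := Int.cast_ne_zero.mpr hs
  exact smul_right_injective _ hq h2

lemma div_mem {s : ℤ} (hs : s ≠ 0) (r : LaurentZ d) :
    ((s : ℚ)⁻¹ • DD.inc (d := d) r ∈ LinearMap.range (DD.inc (d := d))) ↔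
      ∃ r', ((s : LaurentZ d)) • r' = r := by
  have hq : (s : ℚ) ≠ 0 := Int.cast_ne_zero.mpr hs
  constructor
  · rintro ⟨r'', h⟩
    refine ⟨r'', DD.inc_injective (d := d) ?_⟩
    rw [map_smul, smul_intCast, h, smul_smul, mul_inv_cancel₀ hq, one_smul]
  · rintro ⟨r', rfl⟩
    refine ⟨r', ?_⟩
    rw [map_smul, smul_intCast, smul_smul, inv_mul_cancel₀ hq, one_smul]

end Scalars

namespace Core

open Scalars DD

variable {d : ℕ} {N₁ N₀ MM : Type}
  [AddCommGroup N₁] [Module (LaurentZ d) N₁]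
  [AddCommGroup N₀] [Module (LaurentZ d) N₀]
  [AddCommGroup MM] [Module (LaurentZ d) MM]

/-- The quotient map `A → K`. -/
abbrev pik : LaurentQ d →ₗ[LaurentZ d] LaurentK d :=
  (LinearMap.range (Algebra.linearMap (LaurentZ d) (LaurentQ d))).mkQ

lemma pik_surjective : Function.Surjective (pik (d := d)) :=
  Submodule.mkQ_surjective _

lemma pik_eq_zero_iff (a : LaurentQ d) :
    pik (d := d) a = 0 ↔ a ∈ LinearMap.range (DD.inc (d := d)) := by
  rw [Submodule.mkQ_apply, Submodule.Quotient.mk_eq_zero]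

set_option maxHeartbeats 2000000 in
lemma core (s : ℤ) (hs : s ≠ 0)
    (i : N₁ →ₗ[LaurentZ d] N₀) (p : N₀ →ₗ[LaurentZ d] MM) (j : N₀ →ₗ[LaurentZ d] N₁)
    (hproj : Module.Projective (LaurentZ d) N₀) (hsurj : Function.Surjective p)
    (hker : LinearMap.ker p = LinearMap.range i)
    (hij : ∀ x, i (j x) = ((s : LaurentZ d)) • x)
    (hji : ∀ y, j (i y) = ((s : LaurentZ d)) • y) :
    ∃ Θ : (N₁ →ₗ[LaurentZ d] LaurentZ d) →ₗ[LaurentZ d] (MM →ₗ[LaurentZ d] LaurentK d),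
      (∀ h x, Θ h (p x) = pik (d := d) ((s : ℚ)⁻¹ • DD.inc (d := d) (h (j x)))) ∧
      Function.Surjective Θ ∧
      LinearMap.ker Θ = LinearMap.range (LinearMap.lcomp (LaurentZ d) (LaurentZ d) i) := by
  classical
  have hq : (s : ℚ) ≠ 0 := Int.cast_ne_zero.mpr hs
  set β : LaurentZ d →ₗ[LaurentZ d] LaurentK d :=
    (pik (d := d)) ∘ₗ (qsmul (d := d) ((s : ℚ)⁻¹)) ∘ₗ (DD.inc (d := d)) with hβ
  set Φ : (N₁ →ₗ[LaurentZ d] LaurentZ d) →ₗ[LaurentZ d] (N₀ →ₗ[LaurentZ d] LaurentK d) :=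
    (LinearMap.llcomp (LaurentZ d) N₀ (LaurentZ d) (LaurentK d) β) ∘ₗ
      (LinearMap.lcomp (LaurentZ d) (LaurentZ d) j) with hΦdef
  have hΦ : ∀ h x, Φ h x = pik (d := d) ((s : ℚ)⁻¹ • DD.inc (d := d) (h (j x))) := by
    intro h x
    rw [hΦdef]
    simp only [LinearMap.comp_apply, LinearMap.llcomp_apply, LinearMap.lcomp_apply, hβ,
      qsmul_apply]
  have hvanish : ∀ h, LinearMap.ker p ≤ LinearMap.ker (Φ h) := by
    intro h x hx
    rw [hker] at hx
    obtain ⟨y, rfl⟩ := hx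
    rw [LinearMap.mem_ker, hΦ, hji, h.map_smul, (DD.inc (d := d)).map_smul, smul_intCast,
      smul_smul, inv_mul_cancel₀ hq, one_smul, pik_eq_zero_iff]
    exact ⟨h y, rfl⟩
  set e := p.quotKerEquivOfSurjective hsurj with he_def
  have he : ∀ x : N₀, e (Submodule.Quotient.mk x) = p x := by
    intro x
    simp [he_def, LinearMap.quotKerEquivOfSurjective, LinearMap.quotKerEquivRange_apply_mk]
  have hesymm : ∀ x : N₀, e.symm (p x) = Submodule.Quotient.mk x := by
    intro x
    apply e.injective
    rw [LinearEquiv.apply_symm_apply, he]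
  set Θ₀ : (N₁ →ₗ[LaurentZ d] LaurentZ d) → (MM →ₗ[LaurentZ d] LaurentK d) := fun h =>
    ((LinearMap.ker p).liftQ (Φ h) (hvanish h)) ∘ₗ (e.symm : MM →ₗ[LaurentZ d] _) with hΘ₀def
  have hΘ₀ : ∀ h x, Θ₀ h (p x) = pik (d := d) ((s : ℚ)⁻¹ • DD.inc (d := d) (h (j x))) := by
    intro h x
    rw [hΘ₀def]
    simp only [LinearMap.comp_apply, LinearEquiv.coe_coe, hesymm, Submodule.liftQ_apply]
    exact hΦ h x
  set Θ : (N₁ →ₗ[LaurentZ d] LaurentZ d) →ₗ[LaurentZ d] (MM →ₗ[LaurentZ d] LaurentK d) :=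
    { toFun := Θ₀
      map_add' := by
        intro h h'
        apply LinearMap.ext
        intro m
        obtain ⟨x, rfl⟩ := hsurj m
        rw [LinearMap.add_apply, hΘ₀, hΘ₀, hΘ₀, LinearMap.add_apply,
          (DD.inc (d := d)).map_add, smul_add, (pik (d := d)).map_add]
      map_smul' := by
        intro c h
        apply LinearMap.ext
        intro m
        obtain ⟨x, rfl⟩ := hsurj m
        rw [RingHom.id_apply, LinearMap.smul_apply, hΘ₀, hΘ₀, LinearMap.smul_apply,
          (DD.inc (d := d)).map_smul, ← rq_smul_comm, (pik (d := d)).map_smul] } with hΘdef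
  have hΘ : ∀ h x, Θ h (p x) = pik (d := d) ((s : ℚ)⁻¹ • DD.inc (d := d) (h (j x))) := hΘ₀
  have hrange_sub : ∀ y : N₁, p (i y) = 0 := by
    intro y
    have : i y ∈ LinearMap.ker p := by rw [hker]; exact ⟨y, rfl⟩
    exact this
  refine ⟨Θ, hΘ, ?_, ?_⟩
  · -- surjectivity
    intro f
    obtain ⟨g, hg⟩ := Module.projective_lifting_property (pik (d := d)) (f ∘ₗ p)
      (pik_surjective (d := d))
    have hgx : ∀ x : N₀, pik (d := d) (g x) = f (p x) := by
      intro x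
      have := LinearMap.congr_fun hg x
      simpa using this
    have hgi : ∀ y : N₁, g (i y) ∈ LinearMap.range (DD.inc (d := d)) := by
      intro y
      rw [← pik_eq_zero_iff, hgx, hrange_sub, map_zero]
    -- extract `h : N₁ →ₗ R` with `inc ∘ h = g ∘ i`
    set eq₁ := LinearEquiv.ofInjective (DD.inc (d := d)) (inc_injective (d := d)) with heq₁
    set h : N₁ →ₗ[LaurentZ d] LaurentZ d :=
      (eq₁.symm : LinearMap.range (DD.inc (d := d)) →ₗ[LaurentZ d] LaurentZ d) ∘ₗ
        ((g ∘ₗ i).codRestrict (LinearMap.range (DD.inc (d := d))) hgi) with hh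
    have hch : ∀ y : N₁, DD.inc (d := d) (h y) = g (i y) := by
      intro y
      have : eq₁ (h y) = ((g ∘ₗ i).codRestrict (LinearMap.range (DD.inc (d := d))) hgi) y := by
        rw [hh]; simp only [LinearMap.comp_apply, LinearEquiv.coe_coe]
        exact eq₁.apply_symm_apply _
      have h2 := congrArg (Subtype.val) this
      rwa [show ∀ z, (eq₁ z : LaurentQ d) = DD.inc (d := d) z from fun z => rfl] at h2
    refine ⟨h, ?_⟩
    apply LinearMap.ext
    intro m
    obtain ⟨x, rfl⟩ := hsurj m
    rw [hΘ, hch, hij, g.map_smul, smul_intCast, smul_smul, inv_mul_cancel₀ hq, one_smul, hgx]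
  · -- kernel
    apply le_antisymm
    · intro h hh
      rw [LinearMap.mem_ker] at hh
      have hmem : ∀ x : N₀, ∃ r', ((s : LaurentZ d)) • r' = h (j x) := by
        intro x
        rw [← Scalars.div_mem (d := d) hs]
        rw [← pik_eq_zero_iff]
        rw [← hΘ h x, hh, LinearMap.zero_apply]
      -- extract `g : N₀ →ₗ R` with `s • g x = h (j x)`
      set mulS : LaurentZ d →ₗ[LaurentZ d] LaurentZ d :=
        { toFun := fun r => (s : LaurentZ d) • r
          map_add' := fun a b => smul_add _ a b
          map_smul' := fun c a => smul_comm _ c a } with hmulS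
      have hmulS_inj : Function.Injective mulS := s_smul_injective (d := d) hs
      have hhj_mem : ∀ x : N₀, (h ∘ₗ j) x ∈ LinearMap.range mulS := by
        intro x
        obtain ⟨r', hr'⟩ := hmem x
        exact ⟨r', hr'⟩
      set eq₂ := LinearEquiv.ofInjective mulS hmulS_inj with heq₂
      set g : N₀ →ₗ[LaurentZ d] LaurentZ d :=
        (eq₂.symm : LinearMap.range mulS →ₗ[LaurentZ d] LaurentZ d) ∘ₗ
          ((h ∘ₗ j).codRestrict (LinearMap.range mulS) hhj_mem) with hg
      have hcg : ∀ x : N₀, ((s : LaurentZ d)) • g x = h (j x) := by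
        intro x
        have : eq₂ (g x) = ((h ∘ₗ j).codRestrict (LinearMap.range mulS) hhj_mem) x := by
          rw [hg]; simp only [LinearMap.comp_apply, LinearEquiv.coe_coe]
          exact eq₂.apply_symm_apply _
        have h2 := congrArg (Subtype.val) this
        rwa [show ∀ z, (eq₂ z : LaurentZ d) = (s : LaurentZ d) • z from fun z => rfl] at h2
      refine ⟨g, ?_⟩
      apply LinearMap.ext
      intro y
      apply s_smul_injective (d := d) hs
      show (s : LaurentZ d) • (g (i y)) = (s : LaurentZ d) • h y
      rw [hcg, hji, h.map_smul]
    · rintro _ ⟨g, rfl⟩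
      rw [LinearMap.mem_ker]
      apply LinearMap.ext
      intro m
      obtain ⟨x, rfl⟩ := hsurj m
      rw [hΘ]
      show pik (d := d) ((s : ℚ)⁻¹ • DD.inc (d := d) (g (i (j x)))) = 0
      rw [hij, g.map_smul, (DD.inc (d := d)).map_smul, smul_intCast, smul_smul,
        inv_mul_cancel₀ hq, one_smul, pik_eq_zero_iff]
      exact ⟨g x, rfl⟩

end Core

namespace Assemble

variable {d : ℕ}

lemma laurent_noetherian : IsNoetherianRing (LaurentZ d) := by
  haveI : AddGroup.FG (Fin d → ℤ) := Module.Finite.iff_addGroup_fg.mp inferInstance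
  haveI : AddMonoid.FG (Fin d → ℤ) := AddGroup.fg_iff_addMonoid_fg.mp inferInstance
  haveI : Algebra.FiniteType ℤ (LaurentZ d) := AddMonoidAlgebra.finiteType_of_fg ℤ _
  exact Algebra.FiniteType.isNoetherianRing ℤ (LaurentZ d)

lemma exists_uniform_torsion (M : Type) [AddCommGroup M] [Module (LaurentZ d) M]
    [Module.Finite (LaurentZ d) M]
    (htor : ∀ m : M, ∃ s : ℤ, s ≠ 0 ∧ ((s : LaurentZ d)) • m = 0) :
    ∃ s : ℤ, s ≠ 0 ∧ ∀ m : M, ((s : LaurentZ d)) • m = 0 := by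
  classical
  obtain ⟨S, hS⟩ := Module.finite_def.mp ‹Module.Finite (LaurentZ d) M›
  choose sf hsf0 hsf using fun m : M => htor m
  set s : ℤ := ∏ x ∈ S, sf x with hs_def
  refine ⟨s, Finset.prod_ne_zero_iff.mpr fun x _ => hsf0 x, ?_⟩
  set T : Submodule (LaurentZ d) M :=
    { carrier := {m | ((s : LaurentZ d)) • m = 0}
      add_mem' := by intro a b ha hb; simp only [Set.mem_setOf_eq, smul_add] at *
                     rw [ha, hb, add_zero]
      zero_mem' := smul_zero _
      smul_mem' := by intro c m hm; simp only [Set.mem_setOf_eq] at *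
                      rw [smul_comm, hm, smul_zero] } with hT
  have hsub : (S : Set M) ⊆ T := by
    intro x hx
    obtain ⟨t, ht⟩ : sf x ∣ s := Finset.dvd_prod_of_mem sf hx
    show ((s : LaurentZ d)) • x = 0
    rw [ht, mul_comm, Int.cast_mul, mul_smul, hsf x, smul_zero]
  intro m
  have : (⊤ : Submodule (LaurentZ d) M) ≤ T := by
    rw [← hS]; exact Submodule.span_le.mpr hsub
  exact this (Submodule.mem_top)

lemma eval_naturality {P Q : Type} [AddCommGroup P] [Module (LaurentZ d) P]
    [AddCommGroup Q] [Module (LaurentZ d) Q] (f : P →ₗ[LaurentZ d] Q) :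
    (LinearMap.lcomp (LaurentZ d) (LaurentZ d)
        (LinearMap.lcomp (LaurentZ d) (LaurentZ d) f)) ∘ₗ (Module.Dual.eval (LaurentZ d) P) =
      (Module.Dual.eval (LaurentZ d) Q) ∘ₗ f :=
  LinearMap.ext fun _ => LinearMap.ext fun _ => rfl

end Assemble


namespace Assemble

variable {d : ℕ}

set_option maxHeartbeats 1000000 in
lemma schanuel {P MM : Type} [AddCommGroup P] [Module (LaurentZ d) P]
    [AddCommGroup MM] [Module (LaurentZ d) MM]
    (hP : Module.Projective (LaurentZ d) P)
    (q : P →ₗ[LaurentZ d] MM) (hq : Function.Surjective q)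
    (N₀ N₁ : Type) [AddCommGroup N₀] [Module (LaurentZ d) N₀]
    [AddCommGroup N₁] [Module (LaurentZ d) N₁]
    (i : N₁ →ₗ[LaurentZ d] N₀) (p : N₀ →ₗ[LaurentZ d] MM)
    (h₀ : Module.Projective (LaurentZ d) N₀) (h₁ : Module.Projective (LaurentZ d) N₁)
    (hi : Function.Injective i) (hp : Function.Surjective p)
    (hip : LinearMap.range i = LinearMap.ker p) :
    Module.Projective (LaurentZ d) (LinearMap.ker q) := by
  classical
  set R := LaurentZ d
  set δ : P × N₀ →ₗ[LaurentZ d] MM :=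
    q ∘ₗ (LinearMap.fst (LaurentZ d) P N₀) - p ∘ₗ (LinearMap.snd (LaurentZ d) P N₀) with hδ
  set X := LinearMap.ker δ with hX
  have memX : ∀ z : P × N₀, z ∈ X ↔ q z.1 = p z.2 := by
    intro z
    rw [hX, LinearMap.mem_ker, hδ, LinearMap.sub_apply, LinearMap.comp_apply,
      LinearMap.comp_apply, sub_eq_zero]
    rfl
  set φ : X →ₗ[LaurentZ d] P := (LinearMap.fst (LaurentZ d) P N₀) ∘ₗ X.subtype with hφ
  set ψ : X →ₗ[LaurentZ d] N₀ := (LinearMap.snd (LaurentZ d) P N₀) ∘ₗ X.subtype with hψ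
  have hφs : Function.Surjective φ := by
    intro x
    obtain ⟨y, hy⟩ := hp (q x)
    exact ⟨⟨(x, y), (memX (x, y)).mpr hy.symm⟩, rfl⟩
  have hψs : Function.Surjective ψ := by
    intro y
    obtain ⟨x, hx⟩ := hq (p y)
    exact ⟨⟨(x, y), (memX (x, y)).mpr hx⟩, rfl⟩
  -- X is projective
  obtain ⟨σ, hσ⟩ := Module.projective_lifting_property φ LinearMap.id hφs
  have hσ' : ∀ x, φ (σ x) = x := fun x => LinearMap.congr_fun hσ x
  have hρmem : ∀ z : X, z - σ (φ z) ∈ LinearMap.ker φ := by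
    intro z
    rw [LinearMap.mem_ker, map_sub, hσ', sub_self]
  set ρ : X →ₗ[LaurentZ d] LinearMap.ker φ :=
    (LinearMap.id - σ ∘ₗ φ).codRestrict (LinearMap.ker φ) (by
      intro z
      simpa using hρmem z) with hρ
  have hρ_apply : ∀ z : X, (ρ z : X) = z - σ (φ z) := fun z => rfl
  set eX : X →ₗ[LaurentZ d] (LinearMap.ker φ × P) := LinearMap.prod ρ φ with heX
  set eXinv : (LinearMap.ker φ × P) →ₗ[LaurentZ d] X :=
    (LinearMap.ker φ).subtype ∘ₗ (LinearMap.fst _ _ _) + σ ∘ₗ (LinearMap.snd _ _ _) with heXinv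
  have h1 : eXinv ∘ₗ eX = LinearMap.id := by
    apply LinearMap.ext
    intro z
    show (ρ z : X) + σ (φ z) = z
    rw [hρ_apply, sub_add_cancel]
  have h2 : eX ∘ₗ eXinv = LinearMap.id := by
    apply LinearMap.ext
    rintro ⟨w, x⟩
    have hw : φ (w : X) = 0 := w.2
    have hφw : φ ((w : X) + σ x) = x := by rw [map_add, hw, hσ', zero_add]
    show (ρ ((w : X) + σ x), φ ((w : X) + σ x)) = (w, x)
    refine Prod.ext ?_ hφw
    · apply Subtype.ext
      rw [hρ_apply, hφw]
      show (w : X) + σ x - σ x = (w : X)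
      rw [add_sub_cancel_right]
  -- ker φ ≃ N₁
  have eker : (LinearMap.ker φ) ≃ₗ[LaurentZ d] N₁ := by
    refine LinearEquiv.symm (LinearEquiv.ofBijective ?_ ⟨?_, ?_⟩)
    · refine LinearMap.codRestrict _ ?_ ?_
      · exact LinearMap.codRestrict X ((LinearMap.inr (LaurentZ d) P N₀) ∘ₗ i) (by
          intro y
          rw [memX]
          show q 0 = p (i y)
          have : i y ∈ LinearMap.ker p := hip ▸ LinearMap.mem_range_self i y
          rw [map_zero, LinearMap.mem_ker.mp this])
      · intro y
        rw [LinearMap.mem_ker]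
        rfl
    · intro a b hab
      apply hi
      have h2 := congrArg (fun z : LinearMap.ker φ => (((z : X) : P × N₀)).2) hab
      simpa using h2
    · rintro ⟨⟨⟨x, y⟩, hz⟩, hker⟩
      have hx0 : x = 0 := hker
      obtain ⟨y', hy'⟩ : y ∈ LinearMap.range i := by
        rw [hip, LinearMap.mem_ker]
        have := (memX (x, y)).mp hz
        rw [hx0, map_zero] at this
        exact this.symm
      refine ⟨y', ?_⟩
      apply Subtype.ext; apply Subtype.ext
      show ((0 : P), i y') = (x, y)
      rw [hx0, hy']
  haveI hkerφ : Module.Projective (LaurentZ d) (LinearMap.ker φ) :=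
    Module.Projective.of_equiv eker.symm
  haveI hXproj : Module.Projective (LaurentZ d) X := by
    haveI := hP
    haveI : Module.Projective (LaurentZ d) (LinearMap.ker φ × P) := inferInstance
    exact Module.Projective.of_split eX eXinv h1
  -- now split ker ψ off X
  obtain ⟨τ, hτ⟩ := Module.projective_lifting_property ψ LinearMap.id hψs
  have hτ' : ∀ y, ψ (τ y) = y := fun y => LinearMap.congr_fun hτ y
  set r : X →ₗ[LaurentZ d] LinearMap.ker ψ :=
    (LinearMap.id - τ ∘ₗ ψ).codRestrict (LinearMap.ker ψ) (by
      intro z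
      rw [LinearMap.mem_ker]
      simp [hτ']) with hr
  have hsplit : r ∘ₗ (LinearMap.ker ψ).subtype = LinearMap.id := by
    apply LinearMap.ext
    intro z
    apply Subtype.ext
    show (z : X) - τ (ψ (z : X)) = (z : X)
    rw [LinearMap.mem_ker.mp z.2, map_zero, sub_zero]
  haveI hkerψ : Module.Projective (LaurentZ d) (LinearMap.ker ψ) :=
    Module.Projective.of_split (LinearMap.ker ψ).subtype r hsplit
  -- ker ψ ≃ ker q
  have ekq : (LinearMap.ker ψ) ≃ₗ[LaurentZ d] (LinearMap.ker q) := by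
    refine LinearEquiv.ofBijective ?_ ⟨?_, ?_⟩
    · refine LinearMap.codRestrict _ (φ ∘ₗ (LinearMap.ker ψ).subtype) ?_
      intro z
      rw [LinearMap.mem_ker]
      have hz : ((z : X) : P × N₀) ∈ X := (z : X).2
      have h2 : q (((z : X) : P × N₀)).1 = p (((z : X) : P × N₀)).2 := (memX _).mp hz
      have h3 : ψ (z : X) = 0 := LinearMap.mem_ker.mp z.2
      have h4 : (((z : X) : P × N₀)).2 = 0 := h3
      show q (((z : X) : P × N₀)).1 = 0
      rw [h2, h4, map_zero]
    · intro a b hab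
      apply Subtype.ext; apply Subtype.ext
      have h1' : φ (a : X) = φ (b : X) := congrArg Subtype.val hab
      have ha : ((((a : X)) : P × N₀)).2 = 0 := LinearMap.mem_ker.mp a.2
      have hb : ((((b : X)) : P × N₀)).2 = 0 := LinearMap.mem_ker.mp b.2
      refine Prod.ext h1' ?_
      rw [ha, hb]
    · rintro ⟨x, hx⟩
      have hmem : (x, (0 : N₀)) ∈ X := by
        rw [memX]
        show q x = p 0
        rw [LinearMap.mem_ker.mp hx, map_zero]
      refine ⟨⟨⟨(x, 0), hmem⟩, ?_⟩, rfl⟩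
      rw [LinearMap.mem_ker]
      rfl
  exact Module.Projective.of_equiv ekq

end Assemble


set_option maxHeartbeats 2000000 in
/-- for an `(R,S)`-module `M`, the evaluation map
`M → Hom_R(Hom_R(M, K), K)`, `m ↦ (f ↦ f m)`, is bijective. -/
theorem double_dual_eval_bijective
    (d : ℕ) (hd : 1 ≤ d) (M : Type) [AddCommGroup M] [Module (LaurentZ d) M]
    [Module.Finite (LaurentZ d) M] (htor : IsSTorsion d M)
    (hpd : HasProjDimLE1 (LaurentZ d) M) :
    Function.Bijective
      (LinearMap.flip (LinearMap.id :
        (M →ₗ[LaurentZ d] LaurentK d) →ₗ[LaurentZ d] (M →ₗ[LaurentZ d] LaurentK d))) := by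
  classical
  obtain ⟨s, hs, hann⟩ := Assemble.exists_uniform_torsion M htor
  obtain ⟨n, q, hq⟩ := Module.Finite.exists_fin' (LaurentZ d) M
  haveI := Assemble.laurent_noetherian (d := d)
  set L := LinearMap.ker q with hL
  haveI hLfin : Module.Finite (LaurentZ d) ↥L :=
    Module.Finite.iff_fg.mpr (IsNoetherian.noetherian L)
  obtain ⟨N₀, N₁, i0, p0, hN₀, hN₁, hi0, hp0, hip0⟩ := hpd
  haveI hLproj : Module.Projective (LaurentZ d) ↥L :=
    Assemble.schanuel inferInstance q hq N₀ N₁ i0 p0 hN₀ hN₁ hi0 hp0 hip0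
  set i := L.subtype with hi
  have hjmem : ∀ x : Fin n → LaurentZ d, ((s : LaurentZ d) • (LinearMap.id :
      (Fin n → LaurentZ d) →ₗ[LaurentZ d] (Fin n → LaurentZ d))) x ∈ L := by
    intro x
    show q ((s : LaurentZ d) • x) = 0
    rw [map_smul, hann]
  set j₁ : (Fin n → LaurentZ d) →ₗ[LaurentZ d] ↥L :=
    LinearMap.codRestrict L ((s : LaurentZ d) • (LinearMap.id :
      (Fin n → LaurentZ d) →ₗ[LaurentZ d] (Fin n → LaurentZ d))) hjmem with hj₁
  have hij : ∀ x, i (j₁ x) = (s : LaurentZ d) • x := fun x => rfl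
  have hji : ∀ y : ↥L, j₁ (i y) = (s : LaurentZ d) • y := fun y => Subtype.ext rfl
  have hkerq : LinearMap.ker q = LinearMap.range i := (Submodule.range_subtype L).symm
  obtain ⟨Θ₁, hΘ₁, hΘ₁s, hΘ₁k⟩ := Core.core s hs i q j₁ inferInstance hq hkerq hij hji
  set i2 := LinearMap.lcomp (LaurentZ d) (LaurentZ d) i with hi2
  set j₂ := LinearMap.lcomp (LaurentZ d) (LaurentZ d) j₁ with hj₂
  set p₂ := (LinearMap.range i2).mkQ with hp₂
  have hij₂ : ∀ u : ↥L →ₗ[LaurentZ d] LaurentZ d, i2 (j₂ u) = (s : LaurentZ d) • u := by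
    intro u
    apply LinearMap.ext
    intro y
    show u (j₁ (i y)) = ((s : LaurentZ d) • u) y
    rw [hji, map_smul, LinearMap.smul_apply]
  have hji₂ : ∀ v : (Fin n → LaurentZ d) →ₗ[LaurentZ d] LaurentZ d,
      j₂ (i2 v) = (s : LaurentZ d) • v := by
    intro v
    apply LinearMap.ext
    intro x
    show v (i (j₁ x)) = ((s : LaurentZ d) • v) x
    rw [hij, map_smul, LinearMap.smul_apply]
  haveI hdualproj : Module.Projective (LaurentZ d) (↥L →ₗ[LaurentZ d] LaurentZ d) :=
    inferInstanceAs (Module.Projective (LaurentZ d) (Module.Dual (LaurentZ d) ↥L))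
  obtain ⟨Θ₂, hΘ₂, hΘ₂s, hΘ₂k⟩ := Core.core s hs i2 p₂ j₂ hdualproj
    (Submodule.mkQ_surjective _) (Submodule.ker_mkQ _) hij₂ hji₂
  set εF := Module.Dual.eval (LaurentZ d) (Fin n → LaurentZ d) with hεF_def
  set εL := Module.Dual.eval (LaurentZ d) ↥L with hεL_def
  have hεF : Function.Bijective εF := Module.bijective_dual_eval _ _
  have hεL : Function.Bijective εL := Module.bijective_dual_eval _ _
  -- the equivalence `Mq ≃ D(M)`
  set e1 := (Submodule.quotEquivOfEq _ _ hΘ₁k.symm).trans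
    (Θ₁.quotKerEquivOfSurjective hΘ₁s) with he1_def
  have he1 : ∀ u, e1 (p₂ u) = Θ₁ u := by
    intro u
    rw [he1_def]
    rw [hp₂]
    rw [Submodule.mkQ_apply, LinearEquiv.trans_apply, Submodule.quotEquivOfEq_mk]
    simp [LinearMap.quotKerEquivOfSurjective, LinearMap.quotKerEquivRange_apply_mk]
  set Ev := LinearMap.flip (LinearMap.id :
    (M →ₗ[LaurentZ d] LaurentK d) →ₗ[LaurentZ d] (M →ₗ[LaurentZ d] LaurentK d)) with hEv_def
  have hEv : ∀ (m : M) (f : M →ₗ[LaurentZ d] LaurentK d), Ev m f = f m := fun m f => rfl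
  have key : ∀ x : Fin n → LaurentZ d,
      (Ev (q x)) ∘ₗ (e1 : _ →ₗ[LaurentZ d] (M →ₗ[LaurentZ d] LaurentK d)) = Θ₂ (εF x) := by
    intro x
    apply LinearMap.ext
    intro mq
    obtain ⟨u, rfl⟩ : ∃ u, p₂ u = mq := Submodule.mkQ_surjective _ mq
    rw [LinearMap.comp_apply, LinearEquiv.coe_coe, he1, hEv, hΘ₁ u x, hΘ₂ (εF x) u]
    rfl
  have key' : ∀ x : Fin n → LaurentZ d, ∀ mq,
      Ev (q x) (e1 mq) = Θ₂ (εF x) mq := by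
    intro x mq
    exact LinearMap.congr_fun (key x) mq
  constructor
  · -- injectivity
    rw [injective_iff_map_eq_zero]
    intro m hm
    obtain ⟨x, rfl⟩ := hq m
    have hzero : Θ₂ (εF x) = 0 := by
      rw [← key x]
      apply LinearMap.ext
      intro mq
      rw [LinearMap.comp_apply, LinearEquiv.coe_coe, hm]
      rfl
    have hxker : εF x ∈ LinearMap.ker Θ₂ := LinearMap.mem_ker.mpr hzero
    rw [hΘ₂k] at hxker
    obtain ⟨H, hH⟩ := hxker
    obtain ⟨y, rfl⟩ := hεL.surjective H
    have hnat : (LinearMap.lcomp (LaurentZ d) (LaurentZ d) i2) (εL y) = εF (i y) :=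
      LinearMap.congr_fun (Assemble.eval_naturality i) y
    have hx : εF x = εF (i y) := by rw [← hH, hnat]
    have hxy : x = i y := hεF.injective hx
    rw [hxy]
    exact y.2
  · -- surjectivity
    intro ψ
    obtain ⟨H2, hH2⟩ := hΘ₂s (ψ ∘ₗ (e1 : _ →ₗ[LaurentZ d] (M →ₗ[LaurentZ d] LaurentK d)))
    obtain ⟨x, rfl⟩ := hεF.surjective H2
    refine ⟨q x, ?_⟩
    apply LinearMap.ext
    intro f
    obtain ⟨mq, rfl⟩ := e1.surjective f
    have h1 := key' x mq
    have h2 := LinearMap.congr_fun hH2 mq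
    rw [h1, h2]
    rfl
end
end
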